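/- Let f : Ω → ℝ and λ : Ω → (0,∞) be bounded and uniformly continuous (with respect to the sup-norm on ℝ²), let w : Ω → (0,∞) be bounded, and assume E(x,y) ⊆ Ω for all (x,y) ∈ Ω. Fix an integer N ≥ 1 and a real p with 1 ≤ p < ∞. Then the persistence-surface map is uniformly continuous on Ω^N with respect to W_p: for every ε > 0 there exists δ > 0 such that for all D, D' ∈ Ω^N with W_p(D,D') < δ one has ‖f̃ρ(D) − f̃ρ(D')‖_{L²(w dA)} < ε. -/

import Mathlib

/-!
Since `W_p(D, D') < δ`, some matching `σ` moves every point of `D` by less than `δ`. For a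
matched pair `p, q`, uniform continuity of `λ` squeezes the square `E(q)` between the squares
centred at `p` of sides `λ(p) - t` and `λ(p) + t`, with `t` small. Hence the bumps
`f(p) χ_{E(p)}` and `f(q) χ_{E(q)}` differ by at most `|f(p) - f(q)|` on `E(p)` and by at most
`sup |f|` on the frame between the two squares, whose area is `O(t)`. Squaring, weighting by the
bounded `w` and summing over the `N` pairs bounds `‖f̃ρ(D) - f̃ρ(D')‖²` by a quantity that tends
to `0` with `|f(p) - f(q)|` and `t`.
-/

open MeasureTheory Real

noncomputable section

/-- The open first quadrant. -/
def Omega : Set (ℝ × ℝ) := {p | 0 < p.1 ∧ 0 < p.2}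

/-- The closed axis-aligned square centered at `p` with side length `l`. -/
def sqr (l : ℝ) (p : ℝ × ℝ) : Set (ℝ × ℝ) :=
  Set.Icc (p.1 - l / 2) (p.1 + l / 2) ×ˢ Set.Icc (p.2 - l / 2) (p.2 + l / 2)

/-- The square `E(p)` associated to a length function `lam`. -/
def sqE (lam : ℝ × ℝ → ℝ) (p : ℝ × ℝ) : Set (ℝ × ℝ) := sqr (lam p) p

/-- The persistence surface of the diagram `D`. -/
def surf (f lam : ℝ × ℝ → ℝ) {N : ℕ} (D : Fin N → ℝ × ℝ) (z : ℝ × ℝ) : ℝ :=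
  ∑ n, f (D n) * Set.indicator (sqE lam (D n)) 1 z

/-- The identification `ρ(D)` of a persistence diagram as a function. -/
def rho (lam : ℝ × ℝ → ℝ) {N : ℕ} (D : Fin N → ℝ × ℝ) (z : ℝ × ℝ) : ℝ :=
  ∑ n, Set.indicator (sqE lam (D n)) 1 z

/-- The `L²(w dA)` norm, the integral taken over `Omega`. -/
def l2norm (w g : ℝ × ℝ → ℝ) : ℝ :=
  Real.sqrt (∫ z in Omega, (g z) ^ 2 * w z)

/-- The `p`-Wasserstein distance between two `N`-point diagrams (sup-norm ground metric). -/
def Wp (p : ℝ) {N : ℕ} (D D' : Fin N → ℝ × ℝ) : ℝ :=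
  ⨅ σ : Equiv.Perm (Fin N), (∑ n, ‖D n - D' (σ n)‖ ^ p) ^ (1 / p)

/-- The `1/2`-Wasserstein distance (no outer power). -/
def Whalf {N : ℕ} (D D' : Fin N → ℝ × ℝ) : ℝ :=
  ⨅ σ : Equiv.Perm (Fin N), ∑ n, ‖D n - D' (σ n)‖ ^ ((1 : ℝ) / 2)

/-- The `1`-Wasserstein distance. -/
def W1 {N : ℕ} (D D' : Fin N → ℝ × ℝ) : ℝ :=
  ⨅ σ : Equiv.Perm (Fin N), ∑ n, ‖D n - D' (σ n)‖

/-- The persistence image value `I_S(D) = ∫_S f̃ρ(D) w dA`. -/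
def Ipix (f lam w : ℝ × ℝ → ℝ) {N : ℕ} (D : Fin N → ℝ × ℝ) (S : Set (ℝ × ℝ)) : ℝ :=
  ∫ z in S, surf f lam D z * w z

/-- `‖f‖_∞ = sup_Ω |f|`. -/
def supAbs (f : ℝ × ℝ → ℝ) : ℝ := ⨆ p : Omega, |f p.val|

/-- `‖λ‖_∞ = sup_Ω λ`. -/
def supLam (lam : ℝ × ℝ → ℝ) : ℝ := ⨆ p : Omega, lam p.val

open Filter Topology

theorem exists_nonneg_forall_le {X : Type*} {s : Set X} {g : X → ℝ}
    (h : ∃ C, ∀ x ∈ s, g x ≤ C) : ∃ C, 0 ≤ C ∧ ∀ x ∈ s, g x ≤ C :=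
  let ⟨C, hC⟩ := h
  ⟨max C 0, le_max_right _ _, fun x hx => (hC x hx).trans (le_max_left _ _)⟩

theorem abs_mul_indicator_sub_mul_indicator_le {α : Type*} {A B I O : Set α} {a b η C : ℝ}
    (hIA : I ⊆ A) (hIB : I ⊆ B) (hAO : A ⊆ O) (hBO : B ⊆ O)
    (hab : |a - b| ≤ η) (ha : |a| ≤ C) (hb : |b| ≤ C) (z : α) :
    |a * A.indicator 1 z - b * B.indicator 1 z|
      ≤ η * A.indicator 1 z + C * (O \ I).indicator 1 z := by
  have hC : 0 ≤ C := (abs_nonneg a).trans ha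
  have hη : 0 ≤ η := (abs_nonneg _).trans hab
  have hframe : 0 ≤ C * (O \ I).indicator 1 z :=
    mul_nonneg hC (Set.indicator_nonneg (fun _ _ => zero_le_one) z)
  by_cases hA : z ∈ A <;> by_cases hB : z ∈ B
  · simp only [Set.indicator_of_mem hA, Set.indicator_of_mem hB, Pi.one_apply, mul_one]
    linarith
  · have hz : z ∈ O \ I := ⟨hAO hA, fun h => hB (hIB h)⟩
    simp only [Set.indicator_of_mem hA, Set.indicator_of_notMem hB, Set.indicator_of_mem hz,
      Pi.one_apply, mul_one, mul_zero, sub_zero]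
    linarith
  · have hz : z ∈ O \ I := ⟨hBO hB, fun h => hA (hIA h)⟩
    simp only [Set.indicator_of_notMem hA, Set.indicator_of_mem hB, Set.indicator_of_mem hz,
      Pi.one_apply, mul_one, mul_zero, zero_sub, abs_neg, zero_add]
    exact hb
  · simp only [Set.indicator_of_notMem hA, Set.indicator_of_notMem hB, mul_zero, sub_self,
      abs_zero, zero_add]
    exact hframe

theorem integrable_indicator_one {X : Type*} [MeasurableSpace X] {μ : Measure X} {s : Set X}
    (hs : MeasurableSet s) (hμs : μ s ≠ ⊤) : Integrable (s.indicator (1 : X → ℝ)) μ :=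
  (integrableOn_const hμs).integrable_indicator hs

theorem setIntegral_sq_mul_le {X : Type*} [MeasurableSpace X] {μ : Measure X} {s : Set X}
    (hs : MeasurableSet s) {g h w : X → ℝ} {M W : ℝ} (hgh : ∀ z, |g z| ≤ h z) (hhM : ∀ z, h z ≤ M)
    (hh : Integrable h μ) (hw0 : ∀ z ∈ s, 0 ≤ w z) (hwW : ∀ z ∈ s, w z ≤ W) (hW : 0 ≤ W) :
    ∫ z in s, g z ^ 2 * w z ∂μ ≤ W * M * ∫ z, h z ∂μ := by
  have hh0 (z : X) : 0 ≤ h z := (abs_nonneg _).trans (hgh z)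
  have hpoint : ∀ z ∈ s, g z ^ 2 * w z ≤ W * M * h z := by
    intro z hz
    have hg : g z ^ 2 ≤ M * h z := by
      rw [← sq_abs]
      nlinarith [abs_nonneg (g z), hgh z, hhM z]
    nlinarith [hw0 z hz, hwW z hz, sq_nonneg (g z), hh0 z, hhM z]
  calc ∫ z in s, g z ^ 2 * w z ∂μ ≤ ∫ z in s, W * M * h z ∂μ :=
        integral_mono_of_nonneg
          (ae_restrict_of_forall_mem hs fun z hz => mul_nonneg (sq_nonneg _) (hw0 z hz))
          (hh.const_mul _).restrict (ae_restrict_of_forall_mem hs hpoint)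
    _ ≤ ∫ z, W * M * h z ∂μ :=
        setIntegral_le_integral (hh.const_mul _)
          (ae_of_all _ fun z => mul_nonneg (mul_nonneg hW ((hh0 z).trans (hhM z))) (hh0 z))
    _ = W * M * ∫ z, h z ∂μ := integral_const_mul _ _

def sqrFrame (l t : ℝ) (p : ℝ × ℝ) : Set (ℝ × ℝ) := sqr (l + t) p \ sqr (l - t) p

theorem measurableSet_Omega : MeasurableSet Omega :=
  (measurableSet_lt measurable_const measurable_fst).inter
    (measurableSet_lt measurable_const measurable_snd)

theorem isCompact_sqr (l : ℝ) (p : ℝ × ℝ) : IsCompact (sqr l p) :=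
  isCompact_Icc.prod isCompact_Icc

theorem measurableSet_sqr (l : ℝ) (p : ℝ × ℝ) : MeasurableSet (sqr l p) :=
  measurableSet_Icc.prod measurableSet_Icc

theorem measurableSet_sqrFrame (l t : ℝ) (p : ℝ × ℝ) : MeasurableSet (sqrFrame l t p) :=
  (measurableSet_sqr _ _).diff (measurableSet_sqr _ _)

theorem measureReal_sqr (l : ℝ) (p : ℝ × ℝ) : volume.real (sqr l p) = max l 0 ^ 2 := by
  have hside (c : ℝ) : volume.real (Set.Icc (c - l / 2) (c + l / 2)) = max l 0 := by
    rw [Real.volume_real_Icc]; congr 1; ring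
  rw [sqr, Measure.volume_eq_prod, measureReal_prod_prod, hside, hside, sq]

theorem sqr_subset_sqr {l l' : ℝ} {p q : ℝ × ℝ} (h : 2 * ‖p - q‖ + l ≤ l') :
    sqr l p ⊆ sqr l' q := by
  rintro z ⟨⟨h1, h2⟩, h3, h4⟩
  have hfst : |p.1 - q.1| ≤ ‖p - q‖ := norm_fst_le (p - q)
  have hsnd : |p.2 - q.2| ≤ ‖p - q‖ := norm_snd_le (p - q)
  rw [abs_le] at hfst hsnd
  exact ⟨⟨by linarith, by linarith⟩, by linarith, by linarith⟩

theorem sqr_mono {l l' : ℝ} (p : ℝ × ℝ) (h : l ≤ l') : sqr l p ⊆ sqr l' p :=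
  sqr_subset_sqr (by simpa using h)

theorem measureReal_sqrFrame_le {l L t : ℝ} (p : ℝ × ℝ) (hl : l ≤ L) (hL : 0 ≤ L) (ht : 0 ≤ t) :
    volume.real (sqrFrame l t p) ≤ 4 * t * (L + t) := by
  rw [sqrFrame, measureReal_sdiff (sqr_mono _ (by linarith)) (measurableSet_sqr _ _)
    (isCompact_sqr _ _).measure_lt_top.ne, measureReal_sqr, measureReal_sqr]
  rcases le_total (l - t) 0 with h | h <;> rcases le_total (l + t) 0 with h' | h' <;>
    simp only [max_eq_left, max_eq_right, h, h'] <;> nlinarith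

theorem surf_comp_perm (f lam : ℝ × ℝ → ℝ) {N : ℕ} (D : Fin N → ℝ × ℝ) (σ : Equiv.Perm (Fin N)) :
    surf f lam (D ∘ σ) = surf f lam D :=
  funext fun z => Equiv.sum_comp σ fun n => f (D n) * (sqE lam (D n)).indicator 1 z

theorem exists_perm_norm_sub_lt_of_Wp_lt {p δ : ℝ} (hp : 0 < p) {N : ℕ}
    {D D' : Fin N → ℝ × ℝ} (h : Wp p D D' < δ) :
    ∃ σ : Equiv.Perm (Fin N), ∀ n, ‖D n - D' (σ n)‖ < δ := by
  obtain ⟨σ, hσ⟩ := exists_lt_of_ciInf_lt h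
  refine ⟨σ, fun n => lt_of_le_of_lt ?_ hσ⟩
  have hterm : ‖D n - D' (σ n)‖ ^ p ≤ ∑ m, ‖D m - D' (σ m)‖ ^ p :=
    Finset.single_le_sum (f := fun m => ‖D m - D' (σ m)‖ ^ p) (fun m _ => by positivity)
      (Finset.mem_univ n)
  calc ‖D n - D' (σ n)‖ = (‖D n - D' (σ n)‖ ^ p) ^ (1 / p) := by
        rw [one_div, Real.rpow_rpow_inv (norm_nonneg _) hp.ne']
    _ ≤ _ := by gcongr

section PersistenceSurface

variable {f lam : ℝ × ℝ → ℝ} {N : ℕ} {D Q : Fin N → ℝ × ℝ} {C L η t : ℝ}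

theorem abs_surf_sub_surf_le (hfD : ∀ n, |f (D n)| ≤ C) (hfQ : ∀ n, |f (Q n)| ≤ C)
    (hf : ∀ n, |f (D n) - f (Q n)| ≤ η)
    (hDQ : ∀ n, 2 * ‖D n - Q n‖ + |lam (D n) - lam (Q n)| ≤ t) (z : ℝ × ℝ) :
    |surf f lam D z - surf f lam Q z| ≤
      ∑ n, (η * (sqE lam (D n)).indicator 1 z
        + C * (sqrFrame (lam (D n)) t (D n)).indicator 1 z) := by
  rw [surf, surf, ← Finset.sum_sub_distrib]
  refine (Finset.abs_sum_le_sum_abs _ _).trans (Finset.sum_le_sum fun n _ => ?_)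
  have hdist := hDQ n
  have hlam₁ := le_abs_self (lam (D n) - lam (Q n))
  have hlam₂ := neg_abs_le (lam (D n) - lam (Q n))
  have hnorm := norm_nonneg (D n - Q n)
  exact abs_mul_indicator_sub_mul_indicator_le
    (sqr_mono _ (by linarith)) (sqr_subset_sqr (by linarith))
    (sqr_mono _ (by linarith)) (sqr_subset_sqr (by rw [norm_sub_rev]; linarith))
    (hf n) (hfD n) (hfQ n) z

theorem integrable_indicator_sqr (l : ℝ) (p : ℝ × ℝ) :
    Integrable ((sqr l p).indicator (1 : ℝ × ℝ → ℝ)) :=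
  integrable_indicator_one (measurableSet_sqr _ _) (isCompact_sqr _ _).measure_lt_top.ne

theorem integrable_indicator_sqrFrame (l t : ℝ) (p : ℝ × ℝ) :
    Integrable ((sqrFrame l t p).indicator (1 : ℝ × ℝ → ℝ)) :=
  integrable_indicator_one (measurableSet_sqrFrame _ _ _)
    ((measure_mono Set.sdiff_subset).trans_lt (isCompact_sqr _ _).measure_lt_top).ne

theorem integrable_mul_indicator_sqE_add_mul_indicator_sqrFrame (η C t : ℝ) (q : ℝ × ℝ) :
    Integrable fun z => η * (sqE lam q).indicator 1 z + C * (sqrFrame (lam q) t q).indicator 1 z :=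
  ((integrable_indicator_sqr _ _).const_mul η).add
    ((integrable_indicator_sqrFrame _ _ _).const_mul C)

theorem integral_mul_indicator_sqE_add_mul_indicator_sqrFrame (η C t : ℝ) (q : ℝ × ℝ) :
    ∫ z, (η * (sqE lam q).indicator 1 z + C * (sqrFrame (lam q) t q).indicator 1 z)
      = η * max (lam q) 0 ^ 2 + C * volume.real (sqrFrame (lam q) t q) := by
  rw [sqE, integral_add ((integrable_indicator_sqr _ _).const_mul η)
    ((integrable_indicator_sqrFrame _ _ _).const_mul C), integral_const_mul, integral_const_mul,
    integral_indicator_one (measurableSet_sqr _ _),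
    integral_indicator_one (measurableSet_sqrFrame _ _ _), measureReal_sqr]

theorem integral_sum_indicator_sqE_add_sqrFrame_le (hη : 0 ≤ η) (hC : 0 ≤ C) (hL : 0 ≤ L)
    (ht : 0 ≤ t) (hlam : ∀ n, lam (D n) ≤ L) :
    ∫ z, ∑ n, (η * (sqE lam (D n)).indicator 1 z
        + C * (sqrFrame (lam (D n)) t (D n)).indicator 1 z)
      ≤ N * (η * L ^ 2 + C * (4 * t * (L + t))) := by
  rw [integral_finsetSum _ fun n _ =>
    integrable_mul_indicator_sqE_add_mul_indicator_sqrFrame η C t (D n)]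
  refine (Finset.sum_le_card_nsmul _ _ (η * L ^ 2 + C * (4 * t * (L + t))) fun n _ => ?_).trans_eq
    (by rw [Finset.card_univ, Fintype.card_fin, nsmul_eq_mul])
  rw [integral_mul_indicator_sqE_add_mul_indicator_sqrFrame]
  gcongr
  · exact max_le (hlam n) hL
  · exact measureReal_sqrFrame_le _ (hlam n) hL ht

theorem setIntegral_sq_surf_sub_surf_mul_le {w : ℝ × ℝ → ℝ} {W : ℝ}
    (hfD : ∀ n, |f (D n)| ≤ C) (hfQ : ∀ n, |f (Q n)| ≤ C) (hf : ∀ n, |f (D n) - f (Q n)| ≤ η)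
    (hDQ : ∀ n, 2 * ‖D n - Q n‖ + |lam (D n) - lam (Q n)| ≤ t) (hlam : ∀ n, lam (D n) ≤ L)
    (hw0 : ∀ q ∈ Omega, 0 ≤ w q) (hwW : ∀ q ∈ Omega, w q ≤ W)
    (hη : 0 ≤ η) (hC : 0 ≤ C) (hL : 0 ≤ L) (ht : 0 ≤ t) (hW : 0 ≤ W) :
    ∫ z in Omega, (surf f lam D z - surf f lam Q z) ^ 2 * w z
      ≤ W * (N * (η + C)) * (N * (η * L ^ 2 + C * (4 * t * (L + t)))) := by
  refine (setIntegral_sq_mul_le (M := N * (η + C)) measurableSet_Omega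
    (abs_surf_sub_surf_le hfD hfQ hf hDQ) (fun z => ?_) ?_ hw0 hwW hW).trans ?_
  · refine (Finset.sum_le_card_nsmul _ _ (η + C) fun n _ => ?_).trans_eq
      (by rw [Finset.card_univ, Fintype.card_fin, nsmul_eq_mul])
    have hle_one (s : Set (ℝ × ℝ)) : s.indicator 1 z ≤ (1 : ℝ) :=
      Set.indicator_apply_le' (fun _ => le_rfl) (fun _ => zero_le_one)
    exact add_le_add (mul_le_of_le_one_right hη (hle_one _)) (mul_le_of_le_one_right hC (hle_one _))
  · exact integrable_finsetSum _ fun n _ =>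
      integrable_mul_indicator_sqE_add_mul_indicator_sqrFrame η C t (D n)
  · gcongr
    exact integral_sum_indicator_sqE_add_sqrFrame_le hη hC hL ht hlam

end PersistenceSurface

theorem stmt7_general (f lam w : ℝ × ℝ → ℝ)
    (hfb : ∃ C : ℝ, ∀ q ∈ Omega, |f q| ≤ C)
    (hfu : ∀ ε > 0, ∃ δ > 0, ∀ q ∈ Omega, ∀ q' ∈ Omega, ‖q - q'‖ < δ → |f q - f q'| < ε)
    (hlamb : ∃ C : ℝ, ∀ q ∈ Omega, lam q ≤ C)
    (hlamu : ∀ ε > 0, ∃ δ > 0, ∀ q ∈ Omega, ∀ q' ∈ Omega, ‖q - q'‖ < δ →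
      |lam q - lam q'| < ε)
    (hw0 : ∀ q ∈ Omega, 0 < w q) (hwb : ∃ C : ℝ, ∀ q ∈ Omega, w q ≤ C)
    (N : ℕ) (p : ℝ) (hp : 1 ≤ p) :
    ∀ ε > 0, ∃ δ > 0, ∀ D D' : Fin N → ℝ × ℝ,
      (∀ n, D n ∈ Omega) → (∀ n, D' n ∈ Omega) → Wp p D D' < δ →
      l2norm w (fun z => surf f lam D z - surf f lam D' z) < ε := by
  obtain ⟨C, hC0, hC⟩ := exists_nonneg_forall_le hfb
  obtain ⟨L, hL0, hL⟩ := exists_nonneg_forall_le hlamb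
  obtain ⟨W, hW0, hW⟩ := exists_nonneg_forall_le hwb
  intro ε hε
  -- the right-hand side of `setIntegral_sq_surf_sub_surf_mul_le` for `η = t = x`
  set bound : ℝ → ℝ := fun x => W * (N * (x + C)) * (N * (x * L ^ 2 + C * (4 * x * (L + x))))
  have hbound : Tendsto bound (𝓝[>] 0) (𝓝 0) := by
    simpa [bound] using ((by fun_prop : Continuous bound).tendsto 0).mono_left nhdsWithin_le_nhds
  obtain ⟨x, hxε, hx⟩ :=
    ((hbound.eventually (gt_mem_nhds (pow_pos hε 2))).and self_mem_nhdsWithin).exists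
  obtain ⟨δf, hδf, hf⟩ := hfu x hx
  obtain ⟨δl, hδl, hl⟩ := hlamu (x / 2) (half_pos hx)
  refine ⟨min (min δf δl) (x / 4), by positivity, fun D D' hD hD' hDD' => ?_⟩
  obtain ⟨σ, hσ⟩ := exists_perm_norm_sub_lt_of_Wp_lt (by linarith) hDD'
  have hD'σ (n : Fin N) : D' (σ n) ∈ Omega := hD' (σ n)
  have hf_close (n : Fin N) : |f (D n) - f (D' (σ n))| ≤ x :=
    (hf _ (hD n) _ (hD'σ n) ((hσ n).trans_le (by simp))).le
  have hDD'_close (n : Fin N) : 2 * ‖D n - D' (σ n)‖ + |lam (D n) - lam (D' (σ n))| ≤ x := by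
    have hnorm := (hσ n).trans_le (min_le_right _ _)
    have hlam := hl _ (hD n) _ (hD'σ n) ((hσ n).trans_le (by simp))
    linarith
  rw [l2norm, Real.sqrt_lt' hε, ← surf_comp_perm f lam D' σ]
  exact (setIntegral_sq_surf_sub_surf_mul_le (fun n => hC _ (hD n)) (fun n => hC _ (hD'σ n))
    hf_close hDD'_close (fun n => hL _ (hD n)) (fun q hq => (hw0 q hq).le) hW hx.le hC0 hL0 hx.le
    hW0).trans_lt hxε

/-- uniform continuity of the persistence-surface map on `Ω^N`
with respect to `W_p`, under boundedness and uniform continuity of `f` and `λ`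
and boundedness of `w`. -/
theorem stmt7 (f lam w : ℝ × ℝ → ℝ)
    (hfb : ∃ C : ℝ, ∀ q ∈ Omega, |f q| ≤ C)
    (hfu : ∀ ε > 0, ∃ δ > 0, ∀ q ∈ Omega, ∀ q' ∈ Omega, ‖q - q'‖ < δ → |f q - f q'| < ε)
    (hlam0 : ∀ q ∈ Omega, 0 < lam q)
    (hlamb : ∃ C : ℝ, ∀ q ∈ Omega, lam q ≤ C)
    (hlamu : ∀ ε > 0, ∃ δ > 0, ∀ q ∈ Omega, ∀ q' ∈ Omega, ‖q - q'‖ < δ →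
      |lam q - lam q'| < ε)
    (hw0 : ∀ q ∈ Omega, 0 < w q) (hwb : ∃ C : ℝ, ∀ q ∈ Omega, w q ≤ C)
    (hE : ∀ q ∈ Omega, sqE lam q ⊆ Omega)
    (N : ℕ) (hN : 1 ≤ N) (p : ℝ) (hp : 1 ≤ p) :
    ∀ ε > 0, ∃ δ > 0, ∀ D D' : Fin N → ℝ × ℝ,
      (∀ n, D n ∈ Omega) → (∀ n, D' n ∈ Omega) → Wp p D D' < δ →
      l2norm w (fun z => surf f lam D z - surf f lam D' z) < ε :=
  stmt7_general f lam w hfb hfu hlamb hlamu hw0 hwb N p hp
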